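/- For every rotation scheme ε_L, ε_R : ZMod 3 → ℤˣ and every dart d in D, the cardinality of the orbit of d under the face-tracing permutation F(ε_L, ε_R) is even and at least 4 (K_{3,3} admits no face boundary circuit of odd length and none of length 2). -/
import Mathlib

abbrev Dart : Type := ZMod 3 × ZMod 3 × Bool

def value (ε : ZMod 3 → ℤˣ) : ℕ := (∑ i : ZMod 3, (ε i : ℤ)).natAbs

def faceTracing (εL εR : ZMod 3 → ℤˣ) : Equiv.Perm Dart where
  toFun := fun d => match d with
    | (i, j, true) => (i + ((εR j : ℤ) : ZMod 3), j, false)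
    | (i, j, false) => (i, j + ((εL i : ℤ) : ZMod 3), true)
  invFun := fun d => match d with
    | (i, j, false) => (i - ((εR j : ℤ) : ZMod 3), j, true)
    | (i, j, true) => (i, j - ((εL i : ℤ) : ZMod 3), false)
  left_inv := by rintro ⟨i, j, _ | _⟩ <;> simp
  right_inv := by rintro ⟨i, j, _ | _⟩ <;> simp

lemma unit_cast_ne_zero (u : ℤˣ) : ((u : ℤ) : ZMod 3) ≠ 0 := by
  rcases Int.units_eq_one_or u with h | h <;> rw [h] <;> decide

lemma bool_flip (εL εR : ZMod 3 → ℤˣ) (d : Dart) :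
    ((faceTracing εL εR) d).2.2 = !d.2.2 := by
  rcases d with ⟨i, j, _ | _⟩ <;> rfl

lemma bool_iter (εL εR : ZMod 3 → ℤˣ) (n : ℕ) (d : Dart) :
    ((faceTracing εL εR)^[n] d).2.2 = xor (n % 2 = 1) d.2.2 := by
  induction n with
  | zero => simp
  | succ n ih =>
    rw [Function.iterate_succ_apply', bool_flip, ih]
    rcases Nat.even_or_odd n with h | h
    · simp [Nat.even_iff.mp h, Nat.succ_mod_two_eq_one_iff.mpr (Nat.even_iff.mp h)]
    · simp [Nat.odd_iff.mp h, Nat.succ_mod_two_eq_zero_iff.mpr (Nat.odd_iff.mp h)]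

/-- For every rotation scheme and every dart, the cardinality of the orbit of the dart
under the face-tracing permutation is even and at least `4`: `K_{3,3}` admits no face
boundary circuit of odd length and none of length `2`. -/
theorem k33_orbit_card_even_ge_four (εL εR : ZMod 3 → ℤˣ) (d : Dart) :
    Even (Nat.card (MulAction.orbit (Subgroup.zpowers (faceTracing εL εR)) d)) ∧
    4 ≤ Nat.card (MulAction.orbit (Subgroup.zpowers (faceTracing εL εR)) d) := by
  set F := faceTracing εL εR with hF
  have hcard : Nat.card (MulAction.orbit (Subgroup.zpowers F) d)
      = Function.minimalPeriod (F • ·) d := by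
    rw [Nat.card_congr (MulAction.orbitZPowersEquiv F d), Nat.card_zmod]
  have hsmul : (F • ·) = ⇑F := rfl
  set n := Function.minimalPeriod (F • ·) d with hn
  have hpos : 0 < n := by
    have : NeZero n := MulAction.minimalPeriod_pos F d
    exact Nat.pos_of_ne_zero this.out
  have hper : Function.IsPeriodicPt ⇑F n d := by
    rw [← hsmul]
    exact Function.isPeriodicPt_minimalPeriod _ _
  -- n is even
  have heven : Even n := by
    rcases Nat.even_or_odd n with h | h
    · exact h
    · exfalso
      have := congrArg (fun x : Dart => x.2.2) hper
      simp only [Function.IsPeriodicPt, Function.IsFixedPt] at hper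
      have hb := bool_iter εL εR n d
      rw [hper, Nat.odd_iff.mp h] at hb
      simp at hb
  -- n ≠ 2
  have hne2 : n ≠ 2 := by
    intro h2
    have hper2 : F^[2] d = d := by rw [← h2]; exact hper
    rcases d with ⟨i, j, b⟩
    cases b
    · have : (F^[2] (i, j, false)).1 = i := by rw [hper2]
      have h1 : F^[2] (i, j, false)
          = (i + ((εR (j + ((εL i : ℤ) : ZMod 3)) : ℤ) : ZMod 3), j + ((εL i : ℤ) : ZMod 3), false) := rfl
      have := congrArg (fun x : Dart => x.2.1) hper2
      rw [h1] at this
      simp only at this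
      exact unit_cast_ne_zero (εL i) (by linear_combination this)
    · have h1 : F^[2] (i, j, true)
          = (i + ((εR j : ℤ) : ZMod 3), j + ((εL (i + ((εR j : ℤ) : ZMod 3)) : ℤ) : ZMod 3), true) := rfl
      have := congrArg (fun x : Dart => x.1) hper2
      rw [h1] at this
      simp only at this
      exact unit_cast_ne_zero (εR j) (by linear_combination this)
  rw [hcard]
  refine ⟨heven, ?_⟩
  rcases heven with ⟨k, hk⟩
  omega
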